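/- arXiv:2406.00949 — 3 statements merged into one kernel-verified Lean document; each statement's English description precedes it below -/
import Mathlib

section
/- Let d ≥ 2, let h : ℝ^d → ℝ be a homogeneous polynomial of degree m ≥ 2, and let ξ_0 = (ξ_0', s_d) ∈ ℝ^{d−1} × ℝ with |ξ_0| = 1, s_d > 0 and ∇h(ξ_0) = 0. Define h_S : B_{ℝ^{d−1}}(0,1) → ℝ by h_S(ξ') = h(ξ', √(1 − |ξ'|²)) (the restriction of h to the unit sphere in the standard upper-hemisphere chart). Then rank Hess h_S(ξ_0') = rank Hess h(ξ_0). -/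
/-!
Write `h_S = h ∘ g`, where `g ξ' = (ξ', √(1 - |ξ'|²))` is the hemisphere chart. Because `∇h`
vanishes at `ξ₀ = g ξ₀'`, the second-order chain rule has no first-order term, and
`Hess h_S(ξ₀') = Jᵀ H J` with `H = Hess h(ξ₀)` and `J = Dg(ξ₀')`. Homogeneity makes `∇h` vanish
on the whole ray through `ξ₀`, so `H ξ₀ = 0`. The first `d - 1` coordinates of `g` are the
identity, so `J` is injective, and since `g` maps into the unit sphere, `range J ⊥ ξ₀`. Counting
dimensions, `ℝ^d = range J ⊕ ℝ ξ₀`; as `ξ₀ ∈ ker H` and `range H ⊥ ξ₀`, conjugating by `J` loses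
no rank.
-/

/-- The Hessian matrix of `f : ℝ^d → ℝ` at `x`. -/
noncomputable def hessMat {d : ℕ} (f : (Fin d → ℝ) → ℝ) (x : Fin d → ℝ) :
    Matrix (Fin d) (Fin d) ℝ :=
  Matrix.of fun i j => iteratedFDeriv ℝ 2 f x ![Pi.single i 1, Pi.single j 1]

open Matrix Module Filter Topology
open scoped ContDiff

theorem MvPolynomial.IsHomogeneous.eval_smul {R σ : Type*} [CommSemiring R]
    {φ : MvPolynomial σ R} {n : ℕ} (hφ : φ.IsHomogeneous n) (t : R) (x : σ → R) :
    eval (t • x) φ = t ^ n * eval x φ := by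
  simp only [eval_eq, Finset.mul_sum]
  refine Finset.sum_congr rfl fun d hd => ?_
  simp only [Pi.smul_apply, smul_eq_mul, mul_pow, Finset.prod_mul_distrib,
    Finset.prod_pow_eq_pow_sum, ← hφ.degree_eq_sum_deg_support hd]
  ring

section Calculus

variable {𝕜 E F G : Type*} [NontriviallyNormedField 𝕜] [NormedAddCommGroup E] [NormedSpace 𝕜 E]
  [NormedAddCommGroup F] [NormedSpace 𝕜 F] [NormedAddCommGroup G] [NormedSpace 𝕜 G]

theorem smul_fderiv_smul_of_homogeneous {f : E → F} {m : ℕ}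
    (hf : ∀ (t : 𝕜) x, f (t • x) = t ^ m • f x) {t : 𝕜} {x : E}
    (hx : DifferentiableAt 𝕜 f x) (htx : DifferentiableAt 𝕜 f (t • x)) :
    t • fderiv 𝕜 f (t • x) = t ^ m • fderiv 𝕜 f x := by
  have hcomp : HasFDerivAt (fun y => f (t • y)) (t • fderiv 𝕜 f (t • x)) x := by
    refine (htx.hasFDerivAt.comp x ((hasFDerivAt_id x).const_smul t)).congr_fderiv ?_
    ext
    simp
  have hscaled : HasFDerivAt (fun y => f (t • y)) (t ^ m • fderiv 𝕜 f x) x := by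
    simp only [hf]
    exact hx.hasFDerivAt.const_smul (t ^ m)
  exact hcomp.unique hscaled

theorem fderiv_fderiv_apply_self_eq_zero_of_homogeneous {f : E → F} {m : ℕ}
    (hf : ∀ (t : 𝕜) x, f (t • x) = t ^ m • f x) (hd : Differentiable 𝕜 f) {x : E}
    (hx : fderiv 𝕜 f x = 0) (hd2 : DifferentiableAt 𝕜 (fderiv 𝕜 f) x) :
    fderiv 𝕜 (fderiv 𝕜 f) x x = 0 := by
  have hray : ∀ t : 𝕜, t ≠ 0 → fderiv 𝕜 f (t • x) = 0 := fun t ht => by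
    simpa [hx, ht] using smul_fderiv_smul_of_homogeneous hf (hd x) (hd (t • x))
  have hline : HasDerivAt (fun t : 𝕜 => fderiv 𝕜 f (t • x)) (fderiv 𝕜 (fderiv 𝕜 f) x x) 1 := by
    have hd2' : HasFDerivAt (fderiv 𝕜 f) (fderiv 𝕜 (fderiv 𝕜 f) x) ((1 : 𝕜) • x) := by
      rw [one_smul]
      exact hd2.hasFDerivAt
    exact hd2'.comp_hasDerivAt (1 : 𝕜)
      (by simpa using (hasDerivAt_id (1 : 𝕜)).smul_const x)
  have hconst : HasDerivAt (fun t : 𝕜 => fderiv 𝕜 f (t • x)) 0 1 :=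
    (hasDerivAt_const (1 : 𝕜) 0).congr_of_eventuallyEq
      ((eventually_ne_nhds one_ne_zero).mono fun t ht => hray t ht)
  exact hline.unique hconst

theorem fderiv_fderiv_comp_apply_of_fderiv_eq_zero {g : E → F} {f : F → G} {x : E}
    (hf : ContDiffAt 𝕜 2 f (g x)) (hg : ContDiffAt 𝕜 2 g x) (hfx : fderiv 𝕜 f (g x) = 0)
    (v w : E) :
    fderiv 𝕜 (fderiv 𝕜 (f ∘ g)) x v w =
      fderiv 𝕜 (fderiv 𝕜 f) (g x) (fderiv 𝕜 g x v) (fderiv 𝕜 g x w) := by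
  have hf_ev : ∀ᶠ y in 𝓝 x, DifferentiableAt 𝕜 f (g y) :=
    hg.continuousAt.tendsto.eventually
      ((hf.eventually (by simp)).mono fun y hy => hy.differentiableAt (by simp))
  have hg_ev : ∀ᶠ y in 𝓝 x, DifferentiableAt 𝕜 g y :=
    (hg.eventually (by simp)).mono fun y hy => hy.differentiableAt (by simp)
  have hchain : fderiv 𝕜 (f ∘ g) =ᶠ[𝓝 x] fun y => (fderiv 𝕜 f (g y)).comp (fderiv 𝕜 g y) :=
    (hf_ev.and hg_ev).mono fun y hy => fderiv_comp y hy.1 hy.2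
  have hf2 : DifferentiableAt 𝕜 (fderiv 𝕜 f) (g x) :=
    (hf.fderiv_right (m := 1) le_rfl).differentiableAt one_ne_zero
  have hg2 : DifferentiableAt 𝕜 (fderiv 𝕜 g) x :=
    (hg.fderiv_right (m := 1) le_rfl).differentiableAt one_ne_zero
  have hderiv : HasFDerivAt (fun y => (fderiv 𝕜 f (g y)).comp (fderiv 𝕜 g y))
      (_ : E →L[𝕜] E →L[𝕜] G) x :=
    (hf2.hasFDerivAt.comp x (hg.differentiableAt (by simp)).hasFDerivAt).clm_comp hg2.hasFDerivAt
  rw [hchain.fderiv_eq, hderiv.fderiv]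
  simp [hfx]

end Calculus

theorem HasFDerivAt.dotProduct_apply_eq_zero_of_sum_sq_eventually_eq {E ι : Type*}
    [NormedAddCommGroup E] [NormedSpace ℝ E] [Fintype ι] {g : E → ι → ℝ} {g' : E →L[ℝ] ι → ℝ}
    {x : E} {c : ℝ} (hg : HasFDerivAt g g' x) (hc : ∀ᶠ y in 𝓝 x, ∑ i, g y i ^ 2 = c) (v : E) :
    g x ⬝ᵥ g' v = 0 := by
  have hsum : HasFDerivAt (fun y => ∑ i, g y i ^ 2)
      (∑ i, (2 • g x i ^ 1) • (ContinuousLinearMap.proj i).comp g') x :=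
    HasFDerivAt.fun_sum fun i _ => (hasFDerivAt_pi'.1 hg i).pow 2
  have hconst : HasFDerivAt (fun y => ∑ i, g y i ^ 2) (0 : E →L[ℝ] ℝ) x :=
    (hasFDerivAt_const c x).congr_of_eventuallyEq hc
  have := congrArg (· v) (hsum.unique hconst)
  simpa [dotProduct, mul_assoc, ← Finset.mul_sum] using this

theorem LinearMap.finrank_range_comp_comp_eq {R V₁ V₂ V₃ V₄ : Type*} [Ring R]
    [AddCommGroup V₁] [AddCommGroup V₂] [AddCommGroup V₃] [AddCommGroup V₄]
    [Module R V₁] [Module R V₂] [Module R V₃] [Module R V₄]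
    (j : V₁ →ₗ[R] V₂) (f : V₂ →ₗ[R] V₃) (t : V₃ →ₗ[R] V₄)
    (hj : range j ⊔ ker f = ⊤) (ht : Disjoint (range f) (ker t)) :
    finrank R (range (t ∘ₗ f ∘ₗ j)) = finrank R (range f) := by
  have hfj : range (f ∘ₗ j) = range f := by
    rw [range_comp, ← Submodule.map_top f, ← hj, Submodule.map_sup, le_ker_iff_map.mp le_rfl,
      sup_bot_eq]
  rw [range_comp, hfj, ← range_domRestrict]
  exact finrank_range_of_inj (injective_domRestrict_iff.2 ht)

namespace Matrix

variable {K ι κ : Type*} [Field K] [Fintype ι] [Fintype κ]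

theorem range_mulVecLin_sup_span_eq_top {J : Matrix ι κ K} {u : ι → K}
    (hJ : Function.Injective J.mulVec) (huJ : ∀ v, u ⬝ᵥ J *ᵥ v = 0) (hu : u ⬝ᵥ u ≠ 0)
    (hcard : Fintype.card ι = Fintype.card κ + 1) :
    LinearMap.range J.mulVecLin ⊔ Submodule.span K {u} = ⊤ := by
  have hu_notMem : u ∉ LinearMap.range J.mulVecLin := by
    rintro ⟨v, rfl⟩
    exact hu (huJ v)
  have hlt : LinearMap.range J.mulVecLin < LinearMap.range J.mulVecLin ⊔ Submodule.span K {u} :=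
    lt_of_le_of_ne le_sup_left fun h =>
      hu_notMem (h ▸ Submodule.mem_sup_right (Submodule.mem_span_singleton_self u))
  have hrange := Submodule.finrank_lt_finrank_of_lt hlt
  rw [LinearMap.finrank_range_of_inj hJ] at hrange
  apply Submodule.eq_top_of_finrank_eq
  have := Submodule.finrank_le (LinearMap.range J.mulVecLin ⊔ Submodule.span K {u})
  simp only [finrank_fintype_fun_eq_card] at *
  omega

theorem rank_transpose_mul_mul_eq_rank {H : Matrix ι ι K} {J : Matrix ι κ K} {u : ι → K}
    (hHu : H *ᵥ u = 0) (huH : u ᵥ* H = 0) (hJ : Function.Injective J.mulVec)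
    (huJ : ∀ v, u ⬝ᵥ J *ᵥ v = 0) (hu : u ⬝ᵥ u ≠ 0)
    (hcard : Fintype.card ι = Fintype.card κ + 1) :
    (Jᵀ * H * J).rank = H.rank := by
  have htop := range_mulVecLin_sup_span_eq_top hJ huJ hu hcard
  rw [rank, rank, Matrix.mul_assoc, mulVecLin_mul, mulVecLin_mul]
  apply LinearMap.finrank_range_comp_comp_eq
  · refine eq_top_mono (sup_le_sup_left ?_ _) htop
    simpa [Submodule.span_le] using hHu
  · rw [Submodule.disjoint_def]
    rintro _ ⟨w, rfl⟩ hw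
    have hJw : ∀ v, H *ᵥ w ⬝ᵥ J *ᵥ v = 0 := by
      intro v
      rw [dotProduct_mulVec, ← mulVec_transpose, show Jᵀ *ᵥ (H *ᵥ w) = 0 from hw, zero_dotProduct]
    have huw : H *ᵥ w ⬝ᵥ u = 0 := by
      rw [dotProduct_comm, dotProduct_mulVec, huH, zero_dotProduct]
    refine dotProduct_eq_zero _ fun z => ?_
    obtain ⟨_, ⟨v, rfl⟩, _, hc, rfl⟩ := Submodule.mem_sup.1 (htop ▸ Submodule.mem_top : z ∈ _)
    obtain ⟨c, rfl⟩ := Submodule.mem_span_singleton.1 hc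
    simp [dotProduct_add, dotProduct_smul, hJw, huw]

end Matrix

section Hessian

variable {d e : ℕ}

theorem hessMat_eq_toMatrix₂' (f : (Fin d → ℝ) → ℝ) (x : Fin d → ℝ) :
    hessMat f x = LinearMap.toMatrix₂' ℝ (fderiv ℝ (fderiv ℝ f) x).toLinearMap₁₂ := by
  ext i j
  simp [hessMat, iteratedFDeriv_two_apply, LinearMap.toMatrix₂'_apply]

theorem dotProduct_hessMat_mulVec (f : (Fin d → ℝ) → ℝ) (x v w : Fin d → ℝ) :
    v ⬝ᵥ hessMat f x *ᵥ w = fderiv ℝ (fderiv ℝ f) x v w := by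
  rw [hessMat_eq_toMatrix₂', ← toLinearMap₂'_apply', toLinearMap₂'_toMatrix']
  rfl

theorem vecMul_hessMat_eq_zero {f : (Fin d → ℝ) → ℝ} {x u : Fin d → ℝ}
    (hu : fderiv ℝ (fderiv ℝ f) x u = 0) : u ᵥ* hessMat f x = 0 :=
  dotProduct_eq_zero _ fun w => by rw [← dotProduct_mulVec, dotProduct_hessMat_mulVec, hu]; rfl

theorem hessMat_mulVec_eq_zero {f : (Fin d → ℝ) → ℝ} {x u : Fin d → ℝ}
    (hf : IsSymmSndFDerivAt ℝ f x) (hu : fderiv ℝ (fderiv ℝ f) x u = 0) :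
    hessMat f x *ᵥ u = 0 :=
  dotProduct_eq_zero _ fun w => by
    rw [dotProduct_comm, dotProduct_hessMat_mulVec, hf.eq, hu]
    rfl

theorem hessMat_comp_of_fderiv_eq_zero {f : (Fin e → ℝ) → ℝ} {g : (Fin d → ℝ) → Fin e → ℝ}
    {x : Fin d → ℝ} (hf : ContDiffAt ℝ 2 f (g x)) (hg : ContDiffAt ℝ 2 g x)
    (hfx : fderiv ℝ f (g x) = 0) :
    hessMat (f ∘ g) x = (LinearMap.toMatrix' (fderiv ℝ g x : (Fin d → ℝ) →ₗ[ℝ] Fin e → ℝ))ᵀ *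
      hessMat f (g x) * LinearMap.toMatrix' (fderiv ℝ g x : (Fin d → ℝ) →ₗ[ℝ] Fin e → ℝ) := by
  rw [hessMat_eq_toMatrix₂', hessMat_eq_toMatrix₂', ← LinearMap.toMatrix₂'_compl₁₂]
  congr 1
  ext v w
  exact fderiv_fderiv_comp_apply_of_fderiv_eq_zero hf hg hfx _ _

end Hessian

noncomputable def upperHemisphereChart (n : ℕ) (y : Fin n → ℝ) : Fin (n + 1) → ℝ :=
  Fin.snoc y √(1 - ∑ j, y j ^ 2)

section UpperHemisphereChart

variable {n : ℕ} {x : Fin n → ℝ}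

@[simp]
theorem upperHemisphereChart_castSucc (y : Fin n → ℝ) (i : Fin n) :
    upperHemisphereChart n y i.castSucc = y i :=
  Fin.snoc_castSucc ..

theorem sum_sq_upperHemisphereChart (hx : ∑ j, x j ^ 2 ≤ 1) :
    ∑ i, upperHemisphereChart n x i ^ 2 = 1 := by
  simp [Fin.sum_univ_castSucc, upperHemisphereChart, Real.sq_sqrt (sub_nonneg.2 hx)]

theorem contDiffAt_upperHemisphereChart {k : WithTop ℕ∞} (hx : ∑ j, x j ^ 2 < 1) :
    ContDiffAt ℝ k (upperHemisphereChart n) x := by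
  refine contDiffAt_pi.2 fun i => Fin.lastCases ?_ (fun i => ?_) i
  · simp only [upperHemisphereChart, Fin.snoc_last]
    exact (contDiffAt_const.sub (ContDiffAt.sum fun j _ => (contDiffAt_apply ℝ ℝ j x).pow 2)).sqrt
      (sub_pos.2 hx).ne'
  · simpa using contDiffAt_apply ℝ ℝ i x

theorem fderiv_upperHemisphereChart_castSucc (hx : ∑ j, x j ^ 2 < 1) (v : Fin n → ℝ)
    (i : Fin n) : fderiv ℝ (upperHemisphereChart n) x v i.castSucc = v i := by
  have hchart := ((contDiffAt_upperHemisphereChart (k := 1) hx).differentiableAt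
    one_ne_zero).hasFDerivAt
  have hcoord := hasFDerivAt_pi'.1 hchart i.castSucc
  simp only [upperHemisphereChart_castSucc] at hcoord
  exact congrArg (· v) (hcoord.unique (hasFDerivAt_apply i x))

theorem injective_fderiv_upperHemisphereChart (hx : ∑ j, x j ^ 2 < 1) :
    Function.Injective (fderiv ℝ (upperHemisphereChart n) x) := fun v w hvw =>
  funext fun i => by
    rw [← fderiv_upperHemisphereChart_castSucc hx v, hvw,
      fderiv_upperHemisphereChart_castSucc hx]

theorem upperHemisphereChart_dotProduct_fderiv (hx : ∑ j, x j ^ 2 < 1) (v : Fin n → ℝ) :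
    upperHemisphereChart n x ⬝ᵥ fderiv ℝ (upperHemisphereChart n) x v = 0 := by
  refine HasFDerivAt.dotProduct_apply_eq_zero_of_sum_sq_eventually_eq (c := 1)
    ((contDiffAt_upperHemisphereChart (k := 1) hx).differentiableAt one_ne_zero).hasFDerivAt
    ?_ v
  have hball : IsOpen {y : Fin n → ℝ | ∑ j, y j ^ 2 < 1} :=
    isOpen_lt (continuous_finsetSum _ fun j _ => (continuous_apply j).pow 2) continuous_const
  filter_upwards [hball.mem_nhds hx] with y hy
  exact sum_sq_upperHemisphereChart hy.le

end UpperHemisphereChart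

theorem stmt_9_general (n m : ℕ)
    (p : MvPolynomial (Fin (n + 1)) ℝ) (hp : p.IsHomogeneous m)
    (h : (Fin (n + 1) → ℝ) → ℝ) (hh : ∀ ξ, h ξ = MvPolynomial.eval ξ p)
    (ξ₀' : Fin n → ℝ) (sd : ℝ) (hsd : 0 < sd)
    (hnorm : ∑ j, (Fin.snoc ξ₀' sd : Fin (n + 1) → ℝ) j ^ 2 = 1)
    (hcrit : fderiv ℝ h (Fin.snoc ξ₀' sd) = 0) :
    (hessMat (fun ξ' : Fin n → ℝ =>
        h (Fin.snoc ξ' (Real.sqrt (1 - ∑ j, ξ' j ^ 2)))) ξ₀').rank =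
      (hessMat h (Fin.snoc ξ₀' sd)).rank := by
  have hsum : ∑ j, ξ₀' j ^ 2 = 1 - sd ^ 2 := by
    simp only [Fin.sum_univ_castSucc, Fin.snoc_castSucc, Fin.snoc_last] at hnorm
    linarith
  have hx : ∑ j, ξ₀' j ^ 2 < 1 := by rw [hsum]; nlinarith
  have hchart : upperHemisphereChart n ξ₀' = Fin.snoc ξ₀' sd := by
    rw [upperHemisphereChart, hsum, sub_sub_cancel, Real.sqrt_sq hsd.le]
  have hsmooth : ContDiff ℝ ω h := by
    rw [funext hh]
    exact (AnalyticOnNhd.eval_mvPolynomial p).contDiff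
  have hradial : fderiv ℝ (fderiv ℝ h) (Fin.snoc ξ₀' sd) (Fin.snoc ξ₀' sd) = 0 :=
    fderiv_fderiv_apply_self_eq_zero_of_homogeneous (m := m)
      (fun t ξ => by simp [hh, hp.eval_smul]) (hsmooth.differentiable (by simp)) hcrit
      ((hsmooth.fderiv_right (m := 1) le_top).differentiable one_ne_zero _)
  change (hessMat (h ∘ upperHemisphereChart n) ξ₀').rank = _
  rw [hessMat_comp_of_fderiv_eq_zero (hsmooth.of_le le_top).contDiffAt
    (contDiffAt_upperHemisphereChart hx) (hchart ▸ hcrit), hchart]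
  refine Matrix.rank_transpose_mul_mul_eq_rank
    (hessMat_mulVec_eq_zero hsmooth.contDiffAt.isSymmSndFDerivAt_of_omega hradial)
    (vecMul_hessMat_eq_zero hradial) ?_ (fun v => ?_) ?_ (by simp)
  · intro v w hvw
    simp only [LinearMap.toMatrix'_mulVec, ContinuousLinearMap.coe_coe] at hvw
    exact injective_fderiv_upperHemisphereChart hx hvw
  · rw [LinearMap.toMatrix'_mulVec, ← hchart]
    exact upperHemisphereChart_dotProduct_fderiv hx v
  · simp [dotProduct, ← sq, hnorm]

/-- for a homogeneous polynomial `h` of degree `m ≥ 2` in `d = n+1 ≥ 2` real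
variables, and a critical point `ξ₀ = (ξ₀', s_d)` of `h` on the unit sphere with `s_d > 0`,
the rank of the Hessian of the restriction `h_S(ξ') = h(ξ', √(1 − |ξ'|²))` of `h` to the
sphere (in the upper-hemisphere chart) at `ξ₀'` equals the rank of the Hessian of `h`
at `ξ₀`. -/
theorem stmt_9 (n m : ℕ) (hn : 1 ≤ n) (hm : 2 ≤ m)
    (p : MvPolynomial (Fin (n + 1)) ℝ) (hp : p.IsHomogeneous m)
    (h : (Fin (n + 1) → ℝ) → ℝ) (hh : ∀ ξ, h ξ = MvPolynomial.eval ξ p)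
    (ξ₀' : Fin n → ℝ) (sd : ℝ) (hsd : 0 < sd)
    (hnorm : ∑ j, (Fin.snoc ξ₀' sd : Fin (n + 1) → ℝ) j ^ 2 = 1)
    (hcrit : fderiv ℝ h (Fin.snoc ξ₀' sd) = 0) :
    (hessMat (fun ξ' : Fin n → ℝ =>
        h (Fin.snoc ξ' (Real.sqrt (1 - ∑ j, ξ' j ^ 2)))) ξ₀').rank =
      (hessMat h (Fin.snoc ξ₀' sd)).rank :=
  stmt_9_general n m p hp h hh ξ₀' sd hsd hnorm hcrit
end

section
/- Let f(r) = m_1 r² + m_2 r + m_3 and g(r) = m_4 r² + m_5 r + m_6 be real polynomials with (m_1,m_2,m_3) ≠ (0,0,0) and (m_4,m_5,m_6) ≠ (0,0,0), and let c ∈ ℝ \ {0}. If f² + c g² is not identically zero and there exist s ∈ ℝ \ {0} and r_0 ∈ ℝ such that f(r)² + c g(r)² = s (r − r_0)^4 for all r (i.e. f² + c g² has a real root of multiplicity four), then there exists c_0 ∈ ℝ \ {0} with f = c_0 g. -/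
/-!
Over `ℂ` choose `k` with `k² = -c`, so that `f² + c g² = (f - k g) (f + k g)`. When a product of
two polynomials of degree at most `2` equals `s (X - r₀)⁴` with `s ≠ 0`, the root `r₀` has
multiplicity at most `2` in each factor, hence exactly `2`. So `(X - r₀)²` divides `f - k g` and
`f + k g`, hence `f` and `g`; having degree at most `2`, both are multiples of `(X - r₀)²`, with
nonzero factors since `f, g ≠ 0`.
-/

open Polynomial

namespace Polynomial

theorem rootMultiplicity_le_natDegree {R : Type*} [CommRing R] [IsDomain R] (p : R[X]) (a : R) :
    p.rootMultiplicity a ≤ p.natDegree := by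
  classical
  rw [← count_roots]
  exact (Multiset.count_le_card _ _).trans (card_roots' p)

theorem X_sub_C_pow_dvd_of_mul_eq {R : Type*} [CommRing R] [IsDomain R] {u v : R[X]} {a s : R}
    {n m : ℕ} (hs : s ≠ 0) (hv : v.natDegree ≤ m)
    (huv : u * v = C s * (X - C a) ^ (n + m)) : (X - C a) ^ n ∣ u := by
  have h0 : u * v ≠ 0 := by
    rw [huv]
    exact mul_ne_zero (C_ne_zero.mpr hs) (pow_ne_zero _ (X_sub_C_ne_zero a))
  have hmult : u.rootMultiplicity a + v.rootMultiplicity a = n + m := by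
    rw [← rootMultiplicity_mul h0, huv, rootMultiplicity_mul (huv ▸ h0), rootMultiplicity_C,
      rootMultiplicity_X_sub_C_pow, zero_add]
  have hv' := (rootMultiplicity_le_natDegree v a).trans hv
  exact (le_rootMultiplicity_iff (left_ne_zero_of_mul h0)).mp (by omega)

theorem X_sub_C_sq_dvd_of_sq_sub_mul_sq_eq {K : Type*} [Field K] (h2 : (2 : K) ≠ 0)
    {f g : K[X]} {k s a : K} (hk : k ≠ 0) (hs : s ≠ 0) (hf : f.natDegree ≤ 2)
    (hg : g.natDegree ≤ 2) (h : f ^ 2 - C (k ^ 2) * g ^ 2 = C s * (X - C a) ^ 4) :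
    (X - C a) ^ 2 ∣ f ∧ (X - C a) ^ 2 ∣ g := by
  have hkg : (C k * g).natDegree ≤ 2 := (natDegree_C_mul_le k g).trans hg
  have hu : (f - C k * g).natDegree ≤ 2 := (natDegree_sub_le _ _).trans (max_le hf hkg)
  have hv : (f + C k * g).natDegree ≤ 2 := (natDegree_add_le _ _).trans (max_le hf hkg)
  have huv : (f - C k * g) * (f + C k * g) = C s * (X - C a) ^ (2 + 2) := by
    rw [← h, C_pow]; ring
  have hdu := X_sub_C_pow_dvd_of_mul_eq hs hv huv
  have hdv := X_sub_C_pow_dvd_of_mul_eq hs hu (mul_comm (f - C k * g) _ ▸ huv)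
  constructor
  · have hsum : (f - C k * g) + (f + C k * g) = C 2 * f := by rw [C_ofNat]; ring
    exact (isUnit_C.mpr h2.isUnit).dvd_mul_left.mp (hsum ▸ dvd_add hdu hdv)
  · have hdiff : (f + C k * g) - (f - C k * g) = C (2 * k) * g := by rw [C_mul, C_ofNat]; ring
    exact (isUnit_C.mpr (mul_ne_zero h2 hk).isUnit).dvd_mul_left.mp (hdiff ▸ dvd_sub hdv hdu)

theorem X_sub_C_sq_dvd_of_sq_add_mul_sq_eq {f g : ℝ[X]} {c s a : ℝ} (hc : c ≠ 0) (hs : s ≠ 0)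
    (hf : f.natDegree ≤ 2) (hg : g.natDegree ≤ 2)
    (h : f ^ 2 + C c * g ^ 2 = C s * (X - C a) ^ 4) :
    (X - C a) ^ 2 ∣ f ∧ (X - C a) ^ 2 ∣ g := by
  obtain ⟨k, hk⟩ := IsAlgClosed.exists_pow_nat_eq (-(c : ℂ)) two_pos
  have hℂ : (f.map (algebraMap ℝ ℂ)) ^ 2 - C (k ^ 2) * (g.map (algebraMap ℝ ℂ)) ^ 2 =
      C (s : ℂ) * (X - C (a : ℂ)) ^ 4 := by
    simpa [hk, Polynomial.map_pow] using congrArg (map (algebraMap ℝ ℂ)) h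
  have hk0 : k ≠ 0 := by
    rintro rfl
    exact hc (by simpa using hk.symm)
  have hX : (X - C (a : ℂ)) ^ 2 = ((X - C a) ^ 2).map (algebraMap ℝ ℂ) := by simp
  simpa only [hX, map_dvd_map'] using X_sub_C_sq_dvd_of_sq_sub_mul_sq_eq two_ne_zero hk0
    (by exact_mod_cast hs) (natDegree_map_le.trans hf) (natDegree_map_le.trans hg) hℂ

theorem eq_C_leadingCoeff_mul_of_X_sub_C_pow_dvd {R : Type*} [CommRing R] [Nontrivial R]
    {f : R[X]} {a : R} {n : ℕ} (hf : f.natDegree ≤ n) (h : (X - C a) ^ n ∣ f) :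
    f = C f.leadingCoeff * (X - C a) ^ n :=
  eq_leadingCoeff_mul_of_monic_of_dvd_of_natDegree_le ((monic_X_sub_C a).pow n) h
    (by rwa [(monic_X_sub_C a).natDegree_pow, natDegree_X_sub_C, mul_one])

end Polynomial

theorem eq_zero_of_forall_quadratic_eq_zero {a b c : ℝ} (h : ∀ r : ℝ, a * r ^ 2 + b * r + c = 0) :
    a = 0 ∧ b = 0 ∧ c = 0 := by
  have h₀ := h 0
  have h₁ := h 1
  have h₂ := h (-1)
  refine ⟨?_, ?_, ?_⟩ <;> linarith

theorem exists_quadratic_eq_mul_sub_sq_of_sq_add_mul_sq_eq {m₁ m₂ m₃ m₄ m₅ m₆ c s r₀ : ℝ}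
    (hc : c ≠ 0) (hs : s ≠ 0)
    (h : ∀ r : ℝ, (m₁ * r ^ 2 + m₂ * r + m₃) ^ 2 + c * (m₄ * r ^ 2 + m₅ * r + m₆) ^ 2 =
      s * (r - r₀) ^ 4) :
    ∃ a b : ℝ, ∀ r : ℝ, m₁ * r ^ 2 + m₂ * r + m₃ = a * (r - r₀) ^ 2 ∧
      m₄ * r ^ 2 + m₅ * r + m₆ = b * (r - r₀) ^ 2 := by
  set f : ℝ[X] := C m₁ * X ^ 2 + C m₂ * X + C m₃
  set g : ℝ[X] := C m₄ * X ^ 2 + C m₅ * X + C m₆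
  have hfg : f ^ 2 + C c * g ^ 2 = C s * (X - C r₀) ^ 4 := Polynomial.funext fun r => by
    simpa [f, g] using h r
  obtain ⟨hf, hg⟩ := X_sub_C_sq_dvd_of_sq_add_mul_sq_eq hc hs natDegree_quadratic_le
    natDegree_quadratic_le hfg
  refine ⟨f.leadingCoeff, g.leadingCoeff, fun r => ⟨?_, ?_⟩⟩
  · simpa [f] using
      congrArg (eval r) (eq_C_leadingCoeff_mul_of_X_sub_C_pow_dvd natDegree_quadratic_le hf)
  · simpa [g] using
      congrArg (eval r) (eq_C_leadingCoeff_mul_of_X_sub_C_pow_dvd natDegree_quadratic_le hg)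

theorem stmt_11_general (m₁ m₂ m₃ m₄ m₅ m₆ c : ℝ)
    (hfg : ¬(m₁ = 0 ∧ m₂ = 0 ∧ m₃ = 0)) (hgg : ¬(m₄ = 0 ∧ m₅ = 0 ∧ m₆ = 0)) (hc : c ≠ 0)
    (hroot : ∃ (s : ℝ) (r₀ : ℝ), s ≠ 0 ∧ ∀ r : ℝ,
      (m₁ * r ^ 2 + m₂ * r + m₃) ^ 2 + c * (m₄ * r ^ 2 + m₅ * r + m₆) ^ 2 =
        s * (r - r₀) ^ 4) :
    ∃ c₀ : ℝ, c₀ ≠ 0 ∧ ∀ r : ℝ,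
      m₁ * r ^ 2 + m₂ * r + m₃ = c₀ * (m₄ * r ^ 2 + m₅ * r + m₆) := by
  obtain ⟨s, r₀, hs, h⟩ := hroot
  obtain ⟨a, b, hab⟩ := exists_quadratic_eq_mul_sub_sq_of_sq_add_mul_sq_eq hc hs h
  have ha : a ≠ 0 := by
    rintro rfl
    exact hfg (eq_zero_of_forall_quadratic_eq_zero fun r => by simp [(hab r).1])
  have hb : b ≠ 0 := by
    rintro rfl
    exact hgg (eq_zero_of_forall_quadratic_eq_zero fun r => by simp [(hab r).2])
  refine ⟨a / b, div_ne_zero ha hb, fun r => ?_⟩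
  rw [(hab r).1, (hab r).2]
  field_simp

/-- if `f(r) = m₁r² + m₂r + m₃` and `g(r) = m₄r² + m₅r + m₆` are nonzero real
quadratic polynomials, `c ≠ 0`, and `f² + c g²` is not identically zero but equals
`s (r − r₀)⁴` for some `s ≠ 0` and `r₀ ∈ ℝ` (i.e. has a real root of multiplicity four),
then `f = c₀ g` for some `c₀ ≠ 0`. -/
theorem stmt_11 (m₁ m₂ m₃ m₄ m₅ m₆ c : ℝ)
    (hfg : ¬(m₁ = 0 ∧ m₂ = 0 ∧ m₃ = 0)) (hgg : ¬(m₄ = 0 ∧ m₅ = 0 ∧ m₆ = 0)) (hc : c ≠ 0)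
    (hne : ¬ ∀ r : ℝ, (m₁ * r ^ 2 + m₂ * r + m₃) ^ 2 + c * (m₄ * r ^ 2 + m₅ * r + m₆) ^ 2 = 0)
    (hroot : ∃ (s : ℝ) (r₀ : ℝ), s ≠ 0 ∧ ∀ r : ℝ,
      (m₁ * r ^ 2 + m₂ * r + m₃) ^ 2 + c * (m₄ * r ^ 2 + m₅ * r + m₆) ^ 2 =
        s * (r - r₀) ^ 4) :
    ∃ c₀ : ℝ, c₀ ≠ 0 ∧ ∀ r : ℝ,
      m₁ * r ^ 2 + m₂ * r + m₃ = c₀ * (m₄ * r ^ 2 + m₅ * r + m₆) :=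
  stmt_11_general m₁ m₂ m₃ m₄ m₅ m₆ c hfg hgg hc hroot
end

section
/- Let P̃_4(z) = (z_1 + z_2 + z_3 + z_4)³ − (z_1³ + z_2³ + z_3³ + z_4³) on ℝ^4. Then (i) the first-order partial derivatives ∂_1 P̃_4, ∂_2 P̃_4, ∂_3 P̃_4, ∂_4 P̃_4 are linearly independent over ℝ: if a_1, a_2, a_3, a_4 ∈ ℝ and Σ_{j=1}^{4} a_j ∂_j P̃_4(z) = 0 for all z ∈ ℝ^4, then a_1 = a_2 = a_3 = a_4 = 0; and (ii) the origin is the only critical point of P̃_4: if ∇P̃_4(z) = 0 for some z ∈ ℝ^4, then z = 0. -/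
/-!
With `s = ∑ i, z i` one has `∂ⱼ P̃₄ z = 3 (s² - zⱼ²)`. At the basis vector `eₖ` this is
`3 (1 - δⱼₖ)`, so a vanishing combination `∑ aⱼ ∂ⱼ P̃₄` gives `∑ a = aₖ` for every `k`, which
forces `a = 0` as soon as there are at least two variables. At a critical point `zⱼ² = s²` for
all `j`, and a parity count shows `s = 0` when the number of variables is even.
-/

noncomputable def P4t (z : Fin 4 → ℝ) : ℝ :=
  (∑ j, z j) ^ 3 - ∑ j, (z j) ^ 3

open Finset

section

variable {ι : Type*} [Fintype ι] [DecidableEq ι]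

noncomputable def sumCubeDefect (z : ι → ℝ) : ℝ :=
  (∑ j, z j) ^ 3 - ∑ j, z j ^ 3

theorem fderiv_sumCubeDefect_single (z : ι → ℝ) (j : ι) :
    fderiv ℝ sumCubeDefect z (Pi.single j 1) = 3 * (∑ i, z i) ^ 2 - 3 * z j ^ 2 := by
  have hsum := HasFDerivAt.fun_sum (u := univ) fun i _ => hasFDerivAt_apply (𝕜 := ℝ) i z
  have hcubes := HasFDerivAt.fun_sum (u := univ) fun i _ =>
    (hasFDerivAt_apply (𝕜 := ℝ) i z).pow 3
  have h : HasFDerivAt sumCubeDefect _ z := (hsum.pow 3).sub hcubes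
  simp [h.fderiv, Pi.single_apply]

theorem sum_mul_fderiv_sumCubeDefect_single (a : ι → ℝ) (k : ι) :
    ∑ j, a j * fderiv ℝ sumCubeDefect (Pi.single k 1) (Pi.single j 1) =
      3 * (∑ j, a j - a k) := by
  simp [fderiv_sumCubeDefect_single, Pi.single_apply, mul_sub, sum_sub_distrib, ← sum_mul]
  ring

end

section

variable {K ι : Type*} [Field K] [CharZero K] [Fintype ι]

theorem eq_zero_of_forall_sum_eq (hι : Fintype.card ι ≠ 1) {a : ι → K}
    (h : ∀ k, ∑ j, a j = a k) : a = 0 := by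
  have hn : (Fintype.card ι : K) * ∑ j, a j = ∑ j, a j :=
    calc _ = ∑ _j : ι, ∑ i, a i := by simp
      _ = ∑ j, a j := sum_congr rfl fun k _ => h k
  have h0 : ∑ j, a j = 0 := (mul_left_eq_self₀.1 hn).resolve_left (by exact_mod_cast hι)
  funext k
  rw [← h k, h0, Pi.zero_apply]

/-- Each `z j` is `± s` with `s = ∑ i, z i`, so `s = (∑ ±1) * s`; over an even index set the
integer `∑ ±1` is even, hence not `1`, and so `s = 0`. -/
theorem eq_zero_of_forall_sq_eq_sq_sum (hι : Even (Fintype.card ι)) {z : ι → K}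
    (h : ∀ j, z j ^ 2 = (∑ i, z i) ^ 2) : z = 0 := by
  classical
  set s := ∑ i, z i
  suffices s = 0 by funext j; simpa [this] using h j
  by_contra hs0
  let ε : ι → ℤ := fun j => if z j = s then 1 else -1
  have hz : ∀ j, z j = ε j * s := fun j => by
    rcases sq_eq_sq_iff_eq_or_eq_neg.1 (h j) with hj | hj <;> simp [ε, hj]
  have hε : ∑ j, ε j = 1 := by
    have : (∑ j, ε j : ℤ) * s = s :=
      calc _ = ∑ j, z j := by push_cast [sum_mul, hz]; rfl
        _ = s := rfl
    exact_mod_cast (mul_left_eq_self₀.1 this).resolve_right hs0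
  have hε_even : ((∑ j, ε j : ℤ) : ZMod 2) = 0 := by
    have hodd : ∀ j, ((ε j : ℤ) : ZMod 2) = 1 := fun j => by
      simp only [ε]; split_ifs <;> decide
    push_cast [hodd]
    simpa using (ZMod.natCast_eq_zero_iff_even).2 hι
  rw [hε] at hε_even
  exact absurd hε_even (by decide)

end

/-- (i) the first-order partial derivatives of `P̃₄` are linearly independent
over `ℝ`; (ii) the origin is the only critical point of `P̃₄`. -/
theorem stmt_18 :
    (∀ a : Fin 4 → ℝ,
      (∀ z : Fin 4 → ℝ, ∑ j, a j * fderiv ℝ P4t z (Pi.single j 1) = 0) →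
      ∀ j, a j = 0) ∧
    (∀ z : Fin 4 → ℝ, (∀ j, fderiv ℝ P4t z (Pi.single j 1) = 0) → z = 0) := by
  have hP : P4t = sumCubeDefect := rfl
  refine ⟨fun a h => ?_, fun z h => ?_⟩
  · have hsum : ∀ k, ∑ j, a j = a k := fun k => by
      have := h (Pi.single k 1)
      rw [hP, sum_mul_fderiv_sumCubeDefect_single] at this
      linarith
    exact congrFun (eq_zero_of_forall_sum_eq (by simp) hsum)
  · refine eq_zero_of_forall_sq_eq_sq_sum (by simp; decide) fun j => ?_
    have := h j
    rw [hP, fderiv_sumCubeDefect_single] at this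
    linarith
end
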